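/- Let b be a planar binary tree with β ≥ 2 leaves. Then the signed count of all ways of obtaining b by growing satisfies Σ_{0 ≤ l ≤ k ≤ β, k+l=β} Σ_{a ∈ T(2), ‖a‖=k} Σ_{E ∈ {ε,Y}^k, n_Y(E)=l, E∝a = b} (−1)^{|a|} = 0. -/

import Mathlib

/-- Planar binary trees: a leaf `ε`, or a grafting `B₊(b₁,b₂)` of two trees under a new root. -/
inductive PBT : Type
  | leaf : PBT
  | node : PBT → PBT → PBT
  deriving DecidableEq

namespace PBT

/-- The number of internal vertices `|b|`. -/
def internal : PBT → ℕ
  | leaf => 0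
  | node b₁ b₂ => internal b₁ + internal b₂ + 1

/-- The number of leaves `‖b‖`. -/
def leaves : PBT → ℕ
  | leaf => 1
  | node b₁ b₂ => leaves b₁ + leaves b₂

/-- The tree `Y` with one internal vertex and two leaves. -/
def Y : PBT := node leaf leaf

/-- Helper for grafting: replaces the leaves of the first argument, in left-to-right
order, by the entries of the list, returning the grown tree and the unused entries. -/
def graftAux : PBT → List PBT → PBT × List PBT
  | leaf, [] => (leaf, [])
  | leaf, e :: rest => (e, rest)
  | node a b, l =>
      let p := graftAux a l
      let q := graftAux b p.2
      (node p.1 q.1, q.2)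

/-- The growing `E ∝ a`: replace the i-th leaf of `a` by the i-th entry of `E`. -/
def graft (a : PBT) (E : List PBT) : PBT := (graftAux a E).1

/-- `Rep b a E` : the pair `(a, E)` is a growing representation of `b`,
i.e. `E ∈ {ε,Y}^‖a‖` and `E ∝ a = b`. -/
def Rep (b a : PBT) (E : List PBT) : Prop :=
  (∀ e ∈ E, e = leaf ∨ e = Y) ∧ E.length = a.leaves ∧ graft a E = b

end PBT


namespace PBT

lemma leaves_pos (b : PBT) : 0 < b.leaves := by
  induction b with
  | leaf => simp [leaves]
  | node a b ha hb => simp only [leaves]; omega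

lemma graftAux_append : ∀ (a : PBT) (E rest : List PBT), E.length = a.leaves →
    graftAux a (E ++ rest) = ((graftAux a E).1, rest) := by
  intro a
  induction a with
  | leaf =>
    intro E rest h
    simp only [leaves] at h
    obtain ⟨e, rfl⟩ := List.length_eq_one_iff.mp h
    simp [graftAux]
  | node a₁ a₂ ih₁ ih₂ =>
    intro E rest h
    simp only [leaves] at h
    have h1 : (E.take a₁.leaves).length = a₁.leaves := by
      rw [List.length_take]; omega
    have h2 : (E.drop a₁.leaves).length = a₂.leaves := by
      rw [List.length_drop]; omega
    conv_lhs => rw [← List.take_append_drop a₁.leaves E, List.append_assoc]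
    conv_rhs => rw [← List.take_append_drop a₁.leaves E]
    simp only [graftAux]
    rw [ih₁ _ _ h1, ih₁ _ _ h1]
    simp only
    rw [ih₂ _ _ h2]

lemma graft_node (a₁ a₂ : PBT) (E₁ E₂ : List PBT) (h₁ : E₁.length = a₁.leaves) :
    graft (node a₁ a₂) (E₁ ++ E₂) = node (graft a₁ E₁) (graft a₂ E₂) := by
  unfold graft
  simp only [graftAux]
  rw [graftAux_append _ _ _ h₁]

lemma leaves_graft : ∀ (a : PBT) (E : List PBT), E.length = a.leaves →
    (graft a E).leaves = (E.map leaves).sum := by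
  intro a
  induction a with
  | leaf =>
    intro E h
    simp only [leaves] at h
    obtain ⟨e, rfl⟩ := List.length_eq_one_iff.mp h
    simp [graft, graftAux]
  | node a₁ a₂ ih₁ ih₂ =>
    intro E h
    simp only [leaves] at h
    have h1 : (E.take a₁.leaves).length = a₁.leaves := by
      rw [List.length_take]; omega
    have h2 : (E.drop a₁.leaves).length = a₂.leaves := by
      rw [List.length_drop]; omega
    conv_lhs => rw [← List.take_append_drop a₁.leaves E]
    rw [graft_node _ _ _ _ h1]
    conv_rhs => rw [← List.take_append_drop a₁.leaves E]
    simp only [leaves, List.map_append, List.sum_append]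
    rw [ih₁ _ h1, ih₂ _ h2]

lemma sum_map_leaves (E : List PBT) (h : ∀ e ∈ E, e = leaf ∨ e = Y) :
    (E.map leaves).sum = E.length + E.count Y := by
  induction E with
  | nil => simp
  | cons e t ih =>
    have ht : ∀ x ∈ t, x = leaf ∨ x = Y := fun x hx => h x (List.mem_cons_of_mem _ hx)
    rcases h e (List.mem_cons_self) with rfl | rfl
    · simp only [List.map_cons, List.sum_cons, List.count_cons, List.length_cons, ih ht,
        leaves]
      simp [Y]
      omega
    · simp only [List.map_cons, List.sum_cons, List.count_cons, List.length_cons, ih ht]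
      simp [Y, leaves]
      omega

def repsF : PBT → Finset (PBT × List PBT)
  | leaf => {(leaf, [leaf])}
  | node b₁ b₂ =>
      (if b₁ = leaf ∧ b₂ = leaf then {(leaf, [Y])} else ∅) ∪
      ((repsF b₁ ×ˢ repsF b₂).image fun pq => (node pq.1.1 pq.2.1, pq.1.2 ++ pq.2.2))

lemma rep_of_mem : ∀ (b : PBT) (p : PBT × List PBT), p ∈ repsF b → Rep b p.1 p.2 := by
  intro b
  induction b with
  | leaf =>
    intro p hp
    simp only [repsF, Finset.mem_singleton] at hp
    subst hp
    exact ⟨by simp, by simp [leaves], by simp [graft, graftAux]⟩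
  | node b₁ b₂ ih₁ ih₂ =>
    intro p hp
    simp only [repsF, Finset.mem_union] at hp
    rcases hp with hp | hp
    · split_ifs at hp with hc
      · simp only [Finset.mem_singleton] at hp
        obtain ⟨rfl, rfl⟩ := hc
        subst hp
        exact ⟨by simp, by simp [leaves], by simp [graft, graftAux, Y]⟩
      · simp at hp
    · simp only [Finset.mem_image, Finset.mem_product] at hp
      obtain ⟨⟨q₁, q₂⟩, ⟨hq₁, hq₂⟩, rfl⟩ := hp
      obtain ⟨he₁, hl₁, hg₁⟩ := ih₁ _ hq₁
      obtain ⟨he₂, hl₂, hg₂⟩ := ih₂ _ hq₂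
      refine ⟨?_, ?_, ?_⟩
      · intro e he
        rcases List.mem_append.mp he with h | h
        · exact he₁ e h
        · exact he₂ e h
      · simp [leaves, hl₁, hl₂]
      · rw [show ((node q₁.1 q₂.1, q₁.2 ++ q₂.2) : PBT × List PBT).1 = node q₁.1 q₂.1 from rfl]
        rw [show ((node q₁.1 q₂.1, q₁.2 ++ q₂.2) : PBT × List PBT).2 = q₁.2 ++ q₂.2 from rfl]
        rw [graft_node _ _ _ _ hl₁, hg₁, hg₂]

lemma mem_of_rep : ∀ (a : PBT) (E : List PBT) (b : PBT), Rep b a E → (a, E) ∈ repsF b := by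
  intro a
  induction a with
  | leaf =>
    intro E b hr
    obtain ⟨he, hl, hg⟩ := hr
    simp only [leaves] at hl
    obtain ⟨e, rfl⟩ := List.length_eq_one_iff.mp hl
    have heb : e = b := by simpa [graft, graftAux] using hg
    subst heb
    rcases he e (List.mem_singleton_self _) with rfl | rfl
    · simp [repsF]
    · simp [repsF, Y]
  | node a₁ a₂ ih₁ ih₂ =>
    intro E b hr
    obtain ⟨he, hl, hg⟩ := hr
    simp only [leaves] at hl
    have h1 : (E.take a₁.leaves).length = a₁.leaves := by
      rw [List.length_take]; omega
    have h2 : (E.drop a₁.leaves).length = a₂.leaves := by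
      rw [List.length_drop]; omega
    have hE : E.take a₁.leaves ++ E.drop a₁.leaves = E := List.take_append_drop _ _
    have hg' : b = node (graft a₁ (E.take a₁.leaves)) (graft a₂ (E.drop a₁.leaves)) := by
      rw [← graft_node _ _ _ _ h1, hE, hg]
    subst hg'
    have m₁ : (a₁, E.take a₁.leaves) ∈ repsF (graft a₁ (E.take a₁.leaves)) :=
      ih₁ _ _ ⟨fun e h' => he e (by rw [← hE]; exact List.mem_append_left _ h'), h1, rfl⟩
    have m₂ : (a₂, E.drop a₁.leaves) ∈ repsF (graft a₂ (E.drop a₁.leaves)) :=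
      ih₂ _ _ ⟨fun e h' => he e (by rw [← hE]; exact List.mem_append_right _ h'), h2, rfl⟩
    simp only [repsF, Finset.mem_union]
    right
    simp only [Finset.mem_image, Finset.mem_product]
    exact ⟨((a₁, E.take a₁.leaves), (a₂, E.drop a₁.leaves)), ⟨m₁, m₂⟩, by simp [hE]⟩

lemma eq_leaf_of_leaves_eq_one {b : PBT} (h : b.leaves = 1) : b = leaf := by
  cases b with
  | leaf => rfl
  | node b₁ b₂ =>
    simp only [leaves] at h
    have := leaves_pos b₁
    have := leaves_pos b₂
    omega

lemma sum_repsF : ∀ b : PBT,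
    (∑ p ∈ repsF b, ((-1 : ℤ) ^ p.1.internal)) = if b = leaf then 1 else 0 := by
  intro b
  induction b with
  | leaf => simp [repsF, internal]
  | node b₁ b₂ ih₁ ih₂ =>
    have hdisj : Disjoint
        (if b₁ = leaf ∧ b₂ = leaf then ({(leaf, [Y])} : Finset (PBT × List PBT)) else ∅)
        ((repsF b₁ ×ˢ repsF b₂).image fun pq => (node pq.1.1 pq.2.1, pq.1.2 ++ pq.2.2)) := by
      rw [Finset.disjoint_left]
      intro p hp hp'
      simp only [Finset.mem_image, Finset.mem_product] at hp'
      obtain ⟨q, _, rfl⟩ := hp'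
      split_ifs at hp with hc
      · simp only [Finset.mem_singleton, Prod.mk.injEq] at hp
        exact absurd hp.1 (by simp)
      · simp at hp
    have hinj : ∀ x ∈ repsF b₁ ×ˢ repsF b₂, ∀ y ∈ repsF b₁ ×ˢ repsF b₂,
        (node x.1.1 x.2.1, x.1.2 ++ x.2.2) = (node y.1.1 y.2.1, y.1.2 ++ y.2.2) → x = y := by
      intro x hx y hy hxy
      simp only [Finset.mem_product] at hx hy
      simp only [Prod.mk.injEq, node.injEq] at hxy
      obtain ⟨⟨e₁, e₂⟩, hE⟩ := hxy
      have l₁ : x.1.2.length = y.1.2.length := by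
        rw [(rep_of_mem _ _ hx.1).2.1, (rep_of_mem _ _ hy.1).2.1, e₁]
      obtain ⟨f₁, f₂⟩ := List.append_inj hE l₁
      exact Prod.ext (Prod.ext e₁ f₁) (Prod.ext e₂ f₂)
    rw [repsF, Finset.sum_union hdisj, Finset.sum_image hinj]
    have hprod : (∑ pq ∈ repsF b₁ ×ˢ repsF b₂,
        ((-1 : ℤ) ^ ((node pq.1.1 pq.2.1, pq.1.2 ++ pq.2.2) : PBT × List PBT).1.internal)) =
        -((∑ p ∈ repsF b₁, ((-1 : ℤ) ^ p.1.internal)) *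
          (∑ p ∈ repsF b₂, ((-1 : ℤ) ^ p.1.internal))) := by
      rw [Finset.sum_product, Finset.sum_mul_sum, ← Finset.sum_neg_distrib]
      refine Finset.sum_congr rfl fun p _ => ?_
      rw [← Finset.sum_neg_distrib]
      refine Finset.sum_congr rfl fun q _ => ?_
      simp only [internal]
      ring
    rw [hprod, ih₁, ih₂]
    have hne : (node b₁ b₂ : PBT) ≠ leaf := by simp
    by_cases hc : b₁ = leaf ∧ b₂ = leaf
    · obtain ⟨rfl, rfl⟩ := hc
      simp [internal]
    · rw [if_neg hc, if_neg hne]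
      rcases not_and_or.mp hc with h | h
      · simp [if_neg h]
      · simp [if_neg h]

lemma rep_set_eq (b : PBT) :
    {p : PBT × List PBT | Rep b p.1 p.2 ∧
        p.2.count Y ≤ p.1.leaves ∧
        p.1.leaves + p.2.count Y = b.leaves} = ↑(repsF b) := by
  ext p
  simp only [Set.mem_setOf_eq, Finset.mem_coe]
  constructor
  · rintro ⟨hr, -, -⟩
    exact mem_of_rep _ _ _ hr
  · intro hp
    have hr := rep_of_mem _ _ hp
    obtain ⟨he, hl, hg⟩ := hr
    have hcount : p.2.count Y ≤ p.1.leaves := hl ▸ List.count_le_length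
    have hlv : p.1.leaves + p.2.count Y = b.leaves := by
      rw [← hg, leaves_graft _ _ hl, sum_map_leaves _ he, hl]
    exact ⟨⟨he, hl, hg⟩, hcount, hlv⟩

end PBT

open scoped BigOperators

/-- For a planar binary tree `b` with `β ≥ 2` leaves, the signed count of all growing
representations of `b` vanishes:
`∑_{0≤l≤k≤β, k+l=β} ∑_{a, ‖a‖=k} ∑_{E ∈ {ε,Y}^k, n_Y(E)=l, E∝a=b} (−1)^{|a|} = 0`.
Since `‖E∝a‖ = ‖a‖ + n_Y(E)`, the constraints `k = ‖a‖`, `l = n_Y(E)`, `k + l = β`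
are recorded explicitly on the pairs `(a, E)`. -/
theorem signed_growing_count_eq_zero (b : PBT) (hb : 2 ≤ b.leaves) :
    ∑ᶠ p ∈ {p : PBT × List PBT | PBT.Rep b p.1 p.2 ∧
        p.2.count PBT.Y ≤ p.1.leaves ∧
        p.1.leaves + p.2.count PBT.Y = b.leaves},
      ((-1 : ℤ) ^ p.1.internal) = 0 := by
  rw [PBT.rep_set_eq b, finsum_mem_coe_finset]
  have hne : b ≠ PBT.leaf := by
    intro h; subst h; simp [PBT.leaves] at hb
  simpa [hne] using PBT.sum_repsF b
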